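/- Let α be Verblunsky coefficients and n_j a strictly increasing sequence of positive integers with α_{n_j−1} ≠ 0 for all j, such that: (i) limsup_{n→∞} |α_n|^{1/n} = b ∈ (0,1); (ii) liminf_{j→∞} |α_{n_j}|^{1/n_j} = b; (iii) for every k = 0,1,2,… there is β_k ∈ ℂ with lim_{j→∞} conj(α_{n_j−k−1})/conj(α_{n_j−1}) = β_k; (iv) for every ε > 0 there is C_ε > 0 so that |α_{n_j−k−1}| (b−ε)^k ≤ C_ε |α_{n_j−1}| for all j and all k = 1,2,…. Then for every ε ∈ (0,b) the series Σ_{k=0}^∞ β_k z^k converges absolutely and uniformly on {|z| ≤ b − ε}, and lim_{j→∞} Φ_{n_j}(z)/conj(α_{n_j−1}) = −S(z) Σ_{k=0}^∞ β_k z^k uniformly on {|z| ≤ b − ε}. -/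

import Mathlib

open Polynomial Filter Topology

/-- The monic orthogonal polynomials on the unit circle, defined by the Szegő
recursion `Φ₀ = 1`, `Φ_{n+1}(z) = z Φ_n(z) - conj(α_n) Φ_n^*(z)`, where the reversed
polynomial is `P^*(z) = Σ_{j=0}^n conj(c_{n-j}) z^j`. -/
noncomputable def PhiP (α : ℕ → ℂ) : ℕ → Polynomial ℂ
  | 0 => 1
  | n + 1 => X * PhiP α n -
      Polynomial.C ((starRingEnd ℂ) (α n)) *
        Polynomial.reflect n (Polynomial.map (starRingEnd ℂ) (PhiP α n))

/-- The reversed polynomial `Φ_n^*(z) = z^n conj(Φ_n(1/conj z))`. -/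
noncomputable def PhiStarP (α : ℕ → ℂ) (n : ℕ) : Polynomial ℂ :=
  Polynomial.reflect n (Polynomial.map (starRingEnd ℂ) (PhiP α n))

/-!
Iterating the Szegő recursion gives
`Φ_n(z) = z^n - ∑_{k<n} conj(α_{n-k-1}) z^k Φ*_{n-k-1}(z)`, and we divide by
`conj(α_{n_j-1})`. Geometric decay of `α` (from the limsup) keeps `Φ_n`, `Φ*_n` bounded on the
closed unit disk and makes `Φ*_n → S` uniformly there. By (iv) the `k`-th ratio is at most
`C / (b - ε/2)^k`, so on `|z| ≤ b - ε` the `k`-th term is dominated by a convergent geometric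
series, and a uniform version of Tannery's theorem lets us pass to the limit termwise. The
leading term `z^{n_j} / conj(α_{n_j-1})` tends to zero because (ii) and (iv) together give
`|α_{n_j-1}| ≳ (b - ε/2)^{n_j}`.
-/

open Finset

section UniformConvergence

variable {ι κ α β G : Type*} [NormedAddCommGroup G] {l : Filter ι} {s : Set α}
  {F : ι → α → G} {f : α → G}

theorem tendstoUniformlyOn_iff_tendsto_sub :
    TendstoUniformlyOn F f l s ↔
      Tendsto (fun p : ι × α ↦ F p.1 p.2 - f p.2) (l ×ˢ 𝓟 s) (𝓝 0) := by
  rw [tendstoUniformlyOn_iff_tendsto, uniformity_eq_comap_nhds_zero G, tendsto_comap_iff]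
  rfl

theorem tendstoUniformlyOn_of_norm_sub_le {u : ι → ℝ} (hu : Tendsto u l (𝓝 0))
    (h : ∀ᶠ i in l, ∀ x ∈ s, ‖F i x - f x‖ ≤ u i) : TendstoUniformlyOn F f l s :=
  tendstoUniformlyOn_iff_tendsto_sub.2 <|
    squeeze_zero_norm' (eventually_prod_principal_iff.2 h) (hu.comp tendsto_fst)

theorem TendstoUniformlyOn.comp_tendsto {l' : Filter κ} (h : TendstoUniformlyOn F f l s)
    {φ : κ → ι} (hφ : Tendsto φ l' l) : TendstoUniformlyOn (fun k ↦ F (φ k)) f l' s :=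
  fun u hu ↦ hφ.eventually (h u hu)

theorem tendstoUniformlyOn_tsum_of_dominated [CompleteSpace G] [l.NeBot]
    {F : ι → β → α → G} {g : β → α → G} {bound : β → ℝ} (h_sum : Summable bound)
    (hF : ∀ k, TendstoUniformlyOn (F · k) (g k) l s)
    (h_bound : ∀ i k, ∀ x ∈ s, ‖F i k x‖ ≤ bound k) :
    TendstoUniformlyOn (fun i x ↦ ∑' k, F i k x) (fun x ↦ ∑' k, g k x) l s := by
  have hg_bound (k : β) (x : α) (hx : x ∈ s) : ‖g k x‖ ≤ bound k :=
    le_of_tendsto ((hF k).tendsto_at hx).norm (.of_forall fun i ↦ h_bound i k x hx)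
  have hdiff_bound : ∀ᶠ p in l ×ˢ 𝓟 s, ∀ k, ‖F p.1 k p.2 - g k p.2‖ ≤ 2 * bound k :=
    eventually_prod_principal_iff.2 <| .of_forall fun i x hx k ↦
      (norm_sub_le _ _).trans (by linarith [h_bound i k x hx, hg_bound k x hx])
  have hdiff := tendsto_tsum_of_dominated_convergence
    (f := fun (p : ι × α) k ↦ F p.1 k p.2 - g k p.2) (h_sum.mul_left 2)
    (fun k ↦ tendstoUniformlyOn_iff_tendsto_sub.1 (hF k)) hdiff_bound
  rw [tsum_zero] at hdiff
  rw [tendstoUniformlyOn_iff_tendsto_sub]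
  refine hdiff.congr' (eventually_prod_principal_iff.2 <| .of_forall fun i x hx ↦ ?_)
  exact (Summable.of_norm_bounded h_sum (h_bound i · x hx)).tsum_sub
    (Summable.of_norm_bounded h_sum (hg_bound · x hx))

end UniformConvergence

theorem exists_le_mul_pow_of_eventually_le {u : ℕ → ℝ} {q : ℝ} (hq : 0 < q)
    (h : ∀ᶠ n in atTop, u n ≤ q ^ n) : ∃ c, ∀ n, u n ≤ c * q ^ n := by
  obtain ⟨N, hN⟩ := eventually_atTop.1 h
  have hsum_nonneg : 0 ≤ ∑ m ∈ range N, |u m| / q ^ m := sum_nonneg fun _ _ ↦ by positivity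
  refine ⟨1 + ∑ m ∈ range N, |u m| / q ^ m, fun n ↦ ?_⟩
  rcases lt_or_ge n N with hn | hn
  · have hn_le : |u n| / q ^ n ≤ ∑ m ∈ range N, |u m| / q ^ m :=
      single_le_sum (f := fun m ↦ |u m| / q ^ m) (fun _ _ ↦ by positivity) (mem_range.2 hn)
    rw [div_le_iff₀ (by positivity)] at hn_le
    nlinarith [le_abs_self (u n), pow_pos hq n]
  · nlinarith [hN n hn, pow_pos hq n]

theorem eventually_le_pow_of_limsup_rpow_inv_lt {u : ℕ → ℝ} {q : ℝ} (hu : ∀ n, 0 ≤ u n)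
    (hbdd : IsBoundedUnder (· ≤ ·) atTop fun n : ℕ ↦ u n ^ (n : ℝ)⁻¹)
    (h : limsup (fun n : ℕ ↦ u n ^ (n : ℝ)⁻¹) atTop < q) : ∀ᶠ n in atTop, u n ≤ q ^ n := by
  filter_upwards [eventually_lt_of_limsup_lt h hbdd, eventually_gt_atTop 0] with n hn hn0
  have hq : 0 ≤ q := (Real.rpow_nonneg (hu n) _).trans hn.le
  rw [← Real.rpow_natCast, ← Real.rpow_inv_le_iff_of_pos (hu n) hq (by positivity)]
  exact hn.le

theorem tendstoUniformlyOn_pow_div {ι : Type*} {l : Filter ι} {N : ι → ℕ}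
    (hN : Tendsto N l atTop) {a : ι → ℂ} {c r₀ r : ℝ} (hr₀ : 0 ≤ r₀) (hr : r₀ < r)
    (ha : ∀ᶠ i in l, r ^ N i ≤ c * ‖a i‖) :
    TendstoUniformlyOn (fun i z ↦ z ^ N i / a i) 0 l {z | ‖z‖ ≤ r₀} := by
  have hr0 : 0 < r := hr₀.trans_lt hr
  refine tendstoUniformlyOn_of_norm_sub_le (u := fun i ↦ c * (r₀ / r) ^ N i) ?_ ?_
  · simpa using ((tendsto_pow_atTop_nhds_zero_of_lt_one (by positivity)
      ((div_lt_one hr0).2 hr)).comp hN).const_mul c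
  filter_upwards [ha] with i hi z hz
  have ha0 : a i ≠ 0 := by
    rintro h
    rw [h, norm_zero, mul_zero] at hi
    exact (pow_pos hr0 _).not_ge hi
  rw [Pi.zero_apply, sub_zero, norm_div, norm_pow, div_le_iff₀ (norm_pos_iff.2 ha0)]
  calc ‖z‖ ^ N i ≤ r₀ ^ N i := by gcongr
    _ = (r₀ / r) ^ N i * r ^ N i := by rw [← mul_pow, div_mul_cancel₀ _ hr0.ne']
    _ ≤ (r₀ / r) ^ N i * (c * ‖a i‖) := by gcongr
    _ = c * (r₀ / r) ^ N i * ‖a i‖ := by ring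

theorem Polynomial.reflect_succ_X_mul {R : Type*} [Semiring R] {f : R[X]} {n : ℕ}
    (hf : f.natDegree ≤ n) : reflect (n + 1) (X * f) = reflect n f := by
  rw [add_comm, reflect_mul _ _ natDegree_X_le hf, ← pow_one X, reflect_monomial,
    revAt_le le_rfl, Nat.sub_self, pow_zero, one_mul]

noncomputable def verblunskyRatio (α : ℕ → ℂ) (n k : ℕ) : ℂ :=
  starRingEnd ℂ (α (n - k - 1)) / starRingEnd ℂ (α (n - 1))

section Szego

variable (α : ℕ → ℂ)

theorem natDegree_PhiP_le : ∀ n, (PhiP α n).natDegree ≤ n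
  | 0 => by simp [PhiP]
  | n + 1 => by
    have hrefl : (reflect n ((PhiP α n).map (starRingEnd ℂ))).natDegree ≤ n :=
      natDegree_reflect_le.trans (max_le le_rfl (natDegree_map_le.trans (natDegree_PhiP_le n)))
    rw [PhiP]
    refine (natDegree_sub_le _ _).trans (max_le ?_ ?_)
    · exact natDegree_mul_le.trans (by linarith [natDegree_X_le (R := ℂ), natDegree_PhiP_le n])
    · exact natDegree_C_mul_le _ _ |>.trans (hrefl.trans n.le_succ)

theorem PhiStarP_succ (n : ℕ) :
    PhiStarP α (n + 1) = PhiStarP α n - C (α n) * (X * PhiP α n) := by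
  have hΦ := natDegree_PhiP_le α n
  have hconj : (PhiStarP α n).map (starRingEnd ℂ) = reflect n (PhiP α n) := by
    simp [PhiStarP, ← reflect_map, Polynomial.map_map]
  have hstar : reflect (n + 1) (reflect n (PhiP α n)) = X * PhiP α n := by
    rw [← reflect_succ_X_mul hΦ, reflect_reflect]
  rw [PhiStarP, PhiP, ← PhiStarP, Polynomial.map_sub, Polynomial.map_mul, Polynomial.map_mul,
    Polynomial.map_X, map_C, hconj, reflect_sub, reflect_C_mul, hstar,
    reflect_succ_X_mul (natDegree_map_le.trans hΦ), ← PhiStarP, Complex.conj_conj]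

theorem eval_PhiP_succ (n : ℕ) (z : ℂ) :
    (PhiP α (n + 1)).eval z =
      z * (PhiP α n).eval z - starRingEnd ℂ (α n) * (PhiStarP α n).eval z := by
  simp [PhiP, PhiStarP]

theorem eval_PhiStarP_succ (n : ℕ) (z : ℂ) :
    (PhiStarP α (n + 1)).eval z = (PhiStarP α n).eval z - α n * (z * (PhiP α n).eval z) := by
  simp [PhiStarP_succ]

theorem eval_PhiP_eq_pow_sub_sum (n : ℕ) (z : ℂ) :
    (PhiP α n).eval z = z ^ n - ∑ k ∈ range n,
      starRingEnd ℂ (α (n - k - 1)) * (z ^ k * (PhiStarP α (n - k - 1)).eval z) := by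
  induction n with
  | zero => simp [PhiP]
  | succ n ih =>
    rw [eval_PhiP_succ, ih, sum_range_succ']
    simp only [Nat.add_sub_add_right, Nat.sub_zero, Nat.add_sub_cancel, pow_zero, one_mul,
      mul_sub, mul_sum, pow_succ]
    ring_nf

theorem norm_eval_PhiP_PhiStarP_le_prod {z : ℂ} (hz : ‖z‖ ≤ 1) (n : ℕ) :
    ‖(PhiP α n).eval z‖ ≤ ∏ k ∈ range n, (1 + ‖α k‖) ∧
      ‖(PhiStarP α n).eval z‖ ≤ ∏ k ∈ range n, (1 + ‖α k‖) := by
  induction n with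
  | zero => simp [PhiP, PhiStarP]
  | succ n ih =>
    obtain ⟨hΦ, hΦstar⟩ := ih
    have hzΦ : ‖z * (PhiP α n).eval z‖ ≤ ∏ k ∈ range n, (1 + ‖α k‖) := by
      rw [norm_mul]; exact (mul_le_of_le_one_left (norm_nonneg _) hz).trans hΦ
    rw [prod_range_succ, mul_one_add, eval_PhiP_succ, eval_PhiStarP_succ]
    constructor
    · refine (norm_sub_le _ _).trans (add_le_add hzΦ ?_)
      rw [norm_mul, Complex.norm_conj, mul_comm]
      exact mul_le_mul_of_nonneg_right hΦstar (norm_nonneg _)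
    · refine (norm_sub_le _ _).trans (add_le_add hΦstar ?_)
      rw [norm_mul, mul_comm]
      exact mul_le_mul_of_nonneg_right hzΦ (norm_nonneg _)

theorem exists_norm_eval_PhiP_PhiStarP_le {c q : ℝ} (hq0 : 0 ≤ q) (hq1 : q < 1)
    (hαq : ∀ n, ‖α n‖ ≤ c * q ^ n) : ∃ M, ∀ n (z : ℂ), ‖z‖ ≤ 1 →
      ‖(PhiP α n).eval z‖ ≤ M ∧ ‖(PhiStarP α n).eval z‖ ≤ M := by
  have hα : Summable (‖α ·‖) := .of_nonneg_of_le (fun _ ↦ norm_nonneg _) hαq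
    ((summable_geometric_of_lt_one hq0 hq1).mul_left c)
  refine ⟨Real.exp (∑' k, ‖α k‖), fun n z hz ↦ ?_⟩
  have hprod : ∏ k ∈ range n, (1 + ‖α k‖) ≤ Real.exp (∑' k, ‖α k‖) :=
    (Real.prod_one_add_le_exp_sum _ fun _ ↦ norm_nonneg _).trans <|
      Real.exp_le_exp.2 (hα.sum_le_tsum _ fun _ _ ↦ norm_nonneg _)
  obtain ⟨hΦ, hΦstar⟩ := norm_eval_PhiP_PhiStarP_le_prod α hz n
  exact ⟨hΦ.trans hprod, hΦstar.trans hprod⟩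

theorem tendstoUniformlyOn_eval_PhiStarP {c q : ℝ} (hq0 : 0 ≤ q) (hq1 : q < 1)
    (hαq : ∀ n, ‖α n‖ ≤ c * q ^ n) {S : ℂ → ℂ}
    (hS : ∀ z : ℂ, ‖z‖ ≤ 1 → Tendsto (fun n ↦ (PhiStarP α n).eval z) atTop (𝓝 (S z))) :
    TendstoUniformlyOn (fun n z ↦ (PhiStarP α n).eval z) S atTop {z | ‖z‖ ≤ 1} := by
  obtain ⟨M, hM⟩ := exists_norm_eval_PhiP_PhiStarP_le α hq0 hq1 hαq
  have hstep (z : ℂ) (hz : ‖z‖ ≤ 1) (n : ℕ) :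
      dist ((PhiStarP α n).eval z) ((PhiStarP α (n + 1)).eval z) ≤ c * M * q ^ n := by
    rw [dist_comm, dist_eq_norm, eval_PhiStarP_succ, sub_sub_cancel_left, norm_neg, norm_mul,
      norm_mul, mul_right_comm]
    refine mul_le_mul (hαq n) ?_ (by positivity) ((norm_nonneg _).trans (hαq n))
    exact (mul_le_of_le_one_left (norm_nonneg _) hz).trans (hM n z hz).1
  refine tendstoUniformlyOn_of_norm_sub_le (u := fun n ↦ c * M * q ^ n / (1 - q)) ?_
    (.of_forall fun n z hz ↦ ?_)
  · simpa using ((tendsto_pow_atTop_nhds_zero_of_lt_one hq0 hq1).const_mul (c * M)).div_const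
      (1 - q)
  · rw [← dist_eq_norm]
    exact dist_le_of_le_geometric_of_tendsto q (c * M) hq1 (hstep z hz) (hS z hz) n

theorem eval_PhiP_div_eq (n : ℕ) (z : ℂ) :
    (PhiP α n).eval z / starRingEnd ℂ (α (n - 1)) = z ^ n / starRingEnd ℂ (α (n - 1)) -
      ∑ k ∈ range n, verblunskyRatio α n k * (z ^ k * (PhiStarP α (n - k - 1)).eval z) := by
  rw [eval_PhiP_eq_pow_sub_sum, sub_div, sum_div]
  congr! 2 with k
  rw [verblunskyRatio, div_mul_eq_mul_div]

theorem norm_verblunskyRatio_le {n : ℕ} {c r : ℝ} (hr : 0 < r) (hnz : α (n - 1) ≠ 0)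
    (hbd : ∀ k, 1 ≤ k → k + 1 ≤ n → ‖α (n - k - 1)‖ * r ^ k ≤ c * ‖α (n - 1)‖)
    {k : ℕ} (hk : k < n) : ‖verblunskyRatio α n k‖ ≤ max c 1 / r ^ k := by
  rcases k.eq_zero_or_pos with rfl | hk0
  · simp [verblunskyRatio, hnz]
  · rw [verblunskyRatio, norm_div, Complex.norm_conj, Complex.norm_conj,
      div_le_div_iff₀ (norm_pos_iff.2 hnz) (by positivity)]
    exact (hbd k hk0 hk).trans (by gcongr; exact le_max_left c 1)

theorem norm_mul_pow_le_of_tendsto_verblunskyRatio {nseq : ℕ → ℕ} (hN : Tendsto nseq atTop atTop)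
    {β : ℕ → ℂ} (hβ : ∀ k, Tendsto (fun j ↦ verblunskyRatio α (nseq j) k) atTop (𝓝 (β k)))
    {c r r' : ℝ} (hratio : ∀ j k, k < nseq j → ‖verblunskyRatio α (nseq j) k‖ ≤ c / r' ^ k)
    (k : ℕ) {z : ℂ} (hz : ‖z‖ ≤ r) : ‖β k * z ^ k‖ ≤ c * (r / r') ^ k := by
  have hβk : ‖β k‖ ≤ c / r' ^ k := le_of_tendsto (hβ k).norm <|
    (hN.eventually_gt_atTop k).mono fun j hj ↦ hratio j k hj
  have hc : 0 ≤ c / r' ^ k := (norm_nonneg _).trans hβk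
  calc ‖β k * z ^ k‖ ≤ c / r' ^ k * r ^ k := by rw [norm_mul, norm_pow]; gcongr
    _ = c * (r / r') ^ k := by rw [div_pow]; ring

theorem eventually_pow_le_mul_norm {nseq : ℕ → ℕ} (hmono : StrictMono nseq) {c r : ℝ}
    (hr : 0 < r) (hlim : r < liminf (fun j ↦ ‖α (nseq j)‖ ^ (nseq j : ℝ)⁻¹) atTop)
    (hbd : ∀ j k, 1 ≤ k → k + 1 ≤ nseq j →
      ‖α (nseq j - k - 1)‖ * r ^ k ≤ c * ‖α (nseq j - 1)‖) :
    ∀ᶠ j in atTop, r ^ nseq j ≤ c * r * ‖α (nseq j - 1)‖ := by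
  have hbdd : IsBoundedUnder (· ≥ ·) atTop fun j ↦ ‖α (nseq j)‖ ^ (nseq j : ℝ)⁻¹ :=
    isBoundedUnder_of ⟨0, fun j ↦ Real.rpow_nonneg (norm_nonneg _) _⟩
  obtain ⟨i, hi, hi0⟩ := ((eventually_lt_of_lt_liminf hlim hbdd).and
    (hmono.tendsto_atTop.eventually_gt_atTop 0)).exists
  have hαi : r ^ nseq i ≤ ‖α (nseq i)‖ := by
    rw [Real.lt_rpow_inv_iff_of_pos hr.le (norm_nonneg _) (by positivity),
      Real.rpow_natCast] at hi
    exact hi.le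
  -- The one index `i` propagates to every later `nseq j` via `hbd` at `k = nseq j - 1 - nseq i`.
  filter_upwards [hmono.tendsto_atTop.eventually_ge_atTop (nseq i + 2)] with j hj
  have hbdj := hbd j (nseq j - 1 - nseq i) (by omega) (by omega)
  rw [show nseq j - (nseq j - 1 - nseq i) - 1 = nseq i by omega] at hbdj
  calc r ^ nseq j = r ^ nseq i * r ^ (nseq j - 1 - nseq i) * r := by
        rw [← pow_add, ← pow_succ]; congr 1; omega
    _ ≤ ‖α (nseq i)‖ * r ^ (nseq j - 1 - nseq i) * r := by gcongr
    _ ≤ c * ‖α (nseq j - 1)‖ * r := by gcongr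
    _ = c * r * ‖α (nseq j - 1)‖ := by ring

theorem tendstoUniformlyOn_verblunskyRatio_mul {nseq : ℕ → ℕ} (hN : Tendsto nseq atTop atTop)
    (k : ℕ) {βk : ℂ} (hβk : Tendsto (fun j ↦ verblunskyRatio α (nseq j) k) atTop (𝓝 βk))
    {S : ℂ → ℂ}
    (hS : TendstoUniformlyOn (fun n z ↦ (PhiStarP α n).eval z) S atTop {z | ‖z‖ ≤ 1})
    {M : ℝ} (hM : ∀ n (z : ℂ), ‖z‖ ≤ 1 → ‖(PhiStarP α n).eval z‖ ≤ M) :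
    TendstoUniformlyOn (fun j z ↦
        verblunskyRatio α (nseq j) k * (z ^ k * (PhiStarP α (nseq j - k - 1)).eval z))
      (fun z ↦ βk * (z ^ k * S z)) atTop {z | ‖z‖ ≤ 1} := by
  set s : Set ℂ := {z | ‖z‖ ≤ 1}
  have hΦ : TendstoUniformlyOn (fun j z ↦ (PhiStarP α (nseq j - k - 1)).eval z) S atTop s :=
    hS.comp_tendsto ((tendsto_sub_atTop_nat 1).comp ((tendsto_sub_atTop_nat k).comp hN))
  have hpow : ∀ᶠ p : ℕ × ℂ in atTop ×ˢ 𝓟 s, ‖p.2 ^ k‖ ≤ 1 := by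
    refine eventually_prod_principal_iff.2 (.of_forall fun _ z hz ↦ ?_)
    simpa using pow_le_one₀ (norm_nonneg z) hz
  have hpow_mul : ∀ᶠ p : ℕ × ℂ in atTop ×ˢ 𝓟 s,
      ‖p.2 ^ k * (PhiStarP α (nseq p.1 - k - 1)).eval p.2‖ ≤ M := by
    refine (hpow.and (eventually_prod_principal_iff.2 (.of_forall fun j z hz ↦ ?_))).mono
      fun p hp ↦ (norm_mul_le _ _).trans ((mul_le_of_le_one_left (norm_nonneg _) hp.1).trans hp.2)
    exact hM (nseq j - k - 1) z hz
  have hratio_lim : Tendsto (fun p : ℕ × ℂ ↦ (verblunskyRatio α (nseq p.1) k - βk) *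
      (p.2 ^ k * (PhiStarP α (nseq p.1 - k - 1)).eval p.2)) (atTop ×ˢ 𝓟 s) (𝓝 0) :=
    ((tendsto_sub_nhds_zero_iff.2 hβk).comp tendsto_fst).zero_mul_isBoundedUnder_le
      (isBoundedUnder_of_eventually_le hpow_mul)
  have hS_lim : Tendsto (fun p : ℕ × ℂ ↦ βk * (p.2 ^ k *
      ((PhiStarP α (nseq p.1 - k - 1)).eval p.2 - S p.2))) (atTop ×ˢ 𝓟 s) (𝓝 0) := by
    simpa using (isBoundedUnder_le_mul_tendsto_zero (isBoundedUnder_of_eventually_le hpow)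
      (tendstoUniformlyOn_iff_tendsto_sub.1 hΦ)).const_mul βk
  rw [tendstoUniformlyOn_iff_tendsto_sub]
  convert hratio_lim.add hS_lim using 2 with p
  · ring
  · simp

theorem tendstoUniformlyOn_sum_verblunskyRatio {nseq : ℕ → ℕ} (hN : Tendsto nseq atTop atTop)
    {β : ℕ → ℂ} (hβ : ∀ k, Tendsto (fun j ↦ verblunskyRatio α (nseq j) k) atTop (𝓝 (β k)))
    {S : ℂ → ℂ}
    (hS : TendstoUniformlyOn (fun n z ↦ (PhiStarP α n).eval z) S atTop {z | ‖z‖ ≤ 1})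
    {M : ℝ} (hM : ∀ n (z : ℂ), ‖z‖ ≤ 1 → ‖(PhiStarP α n).eval z‖ ≤ M)
    {c r r' : ℝ} (hc : 0 ≤ c) (hr : 0 ≤ r) (hrr' : r < r') (hr1 : r ≤ 1)
    (hratio : ∀ j k, k < nseq j → ‖verblunskyRatio α (nseq j) k‖ ≤ c / r' ^ k) :
    TendstoUniformlyOn (fun j z ↦ ∑ k ∈ range (nseq j),
        verblunskyRatio α (nseq j) k * (z ^ k * (PhiStarP α (nseq j - k - 1)).eval z))
      (fun z ↦ ∑' k, β k * (z ^ k * S z)) atTop {z | ‖z‖ ≤ r} := by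
  set s : Set ℂ := {z | ‖z‖ ≤ r}
  have hs : s ⊆ {z | ‖z‖ ≤ 1} := fun z hz ↦ le_trans hz hr1
  have hM0 : 0 ≤ M := (norm_nonneg _).trans (hM 0 0 (by simp))
  have hr' : 0 < r' := hr.trans_lt hrr'
  let T (j k : ℕ) (z : ℂ) : ℂ := if k < nseq j then
    verblunskyRatio α (nseq j) k * (z ^ k * (PhiStarP α (nseq j - k - 1)).eval z) else 0
  have hT_sum (j : ℕ) (z : ℂ) : ∑' k, T j k z = ∑ k ∈ range (nseq j),
      verblunskyRatio α (nseq j) k * (z ^ k * (PhiStarP α (nseq j - k - 1)).eval z) := by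
    rw [tsum_eq_sum (s := range (nseq j)) fun k hk ↦ if_neg (by simpa using hk)]
    exact sum_congr rfl fun k hk ↦ if_pos (mem_range.1 hk)
  have hT_bound (j k : ℕ) (z : ℂ) (hz : z ∈ s) : ‖T j k z‖ ≤ c * M * (r / r') ^ k := by
    simp only [T]
    split_ifs with hk
    · rw [norm_mul, norm_mul, norm_pow]
      calc _ ≤ c / r' ^ k * (r ^ k * M) := by
            gcongr
            exacts [hratio j k hk, hz, hM _ _ (hs hz)]
        _ = c * M * (r / r') ^ k := by rw [div_pow]; ring
    · rw [norm_zero]; positivity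
  have hT_lim (k : ℕ) :
      TendstoUniformlyOn (fun j ↦ T j k) (fun z ↦ β k * (z ^ k * S z)) atTop s :=
    ((tendstoUniformlyOn_verblunskyRatio_mul α hN k (hβ k) hS hM).mono hs).congr
      ((hN.eventually_gt_atTop k).mono fun j hj z _ ↦ (if_pos hj).symm)
  refine (tendstoUniformlyOn_tsum_of_dominated ((summable_geometric_of_lt_one
    (div_nonneg hr hr'.le) ((div_lt_one hr').2 hrr')).mul_left (c * M)) hT_lim hT_bound).congr ?_
  exact .of_forall fun j z _ ↦ hT_sum j z

theorem tendstoUniformlyOn_eval_PhiP_div {nseq : ℕ → ℕ} (hN : Tendsto nseq atTop atTop)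
    {β : ℕ → ℂ} (hβ : ∀ k, Tendsto (fun j ↦ verblunskyRatio α (nseq j) k) atTop (𝓝 (β k)))
    {S : ℂ → ℂ}
    (hS : TendstoUniformlyOn (fun n z ↦ (PhiStarP α n).eval z) S atTop {z | ‖z‖ ≤ 1})
    {M : ℝ} (hM : ∀ n (z : ℂ), ‖z‖ ≤ 1 → ‖(PhiStarP α n).eval z‖ ≤ M)
    {c c' r r' : ℝ} (hc : 0 ≤ c) (hr : 0 ≤ r) (hrr' : r < r') (hr1 : r ≤ 1)
    (hratio : ∀ j k, k < nseq j → ‖verblunskyRatio α (nseq j) k‖ ≤ c / r' ^ k)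
    (hlow : ∀ᶠ j in atTop, r' ^ nseq j ≤ c' * ‖α (nseq j - 1)‖) :
    TendstoUniformlyOn (fun j z ↦ (PhiP α (nseq j)).eval z / starRingEnd ℂ (α (nseq j - 1)))
      (fun z ↦ -S z * ∑' k, β k * z ^ k) atTop {z | ‖z‖ ≤ r} := by
  have hpow := tendstoUniformlyOn_pow_div hN (a := fun j ↦ starRingEnd ℂ (α (nseq j - 1))) hr hrr'
    (by simpa only [Complex.norm_conj] using hlow)
  have hsum := tendstoUniformlyOn_sum_verblunskyRatio α hN hβ hS hM hc hr hrr' hr1 hratio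
  refine ((hpow.sub hsum).congr (.of_forall fun j z _ ↦ (eval_PhiP_div_eq α _ z).symm)).congr_right
    fun z _ ↦ ?_
  simp only [Pi.sub_apply, Pi.zero_apply, zero_sub, ← mul_assoc, tsum_mul_right]
  ring

end Szego

theorem stmt_8_general (α : ℕ → ℂ) (hα : ∀ n, ‖α n‖ < 1)
    (b : ℝ) (hb1 : b < 1)
    (nseq : ℕ → ℕ) (hmono : StrictMono nseq)
    (hnz : ∀ j, α (nseq j - 1) ≠ 0)
    (hlimsup : Filter.limsup (fun n : ℕ => ‖α n‖ ^ ((n : ℝ))⁻¹) atTop = b)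
    (hliminf : Filter.liminf (fun j : ℕ =>
      ‖α (nseq j)‖ ^ ((nseq j : ℝ))⁻¹) atTop = b)
    (β : ℕ → ℂ)
    (hβ : ∀ k : ℕ, Tendsto (fun j : ℕ =>
      (starRingEnd ℂ) (α (nseq j - k - 1)) / (starRingEnd ℂ) (α (nseq j - 1)))
      atTop (nhds (β k)))
    (hbd : ∀ ε : ℝ, 0 < ε → ∃ Cε : ℝ, 0 < Cε ∧ ∀ j k : ℕ, 1 ≤ k → k + 1 ≤ nseq j →
      ‖α (nseq j - k - 1)‖ * (b - ε) ^ k ≤ Cε * ‖α (nseq j - 1)‖)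
    (S : ℂ → ℂ)
    (hS : ∀ z : ℂ, ‖z‖ < 1 / b →
      Tendsto (fun n : ℕ => (PhiStarP α n).eval z) atTop (nhds (S z)))
 :
    ∀ ε : ℝ, 0 < ε → ε < b →
      (∀ z : ℂ, ‖z‖ ≤ b - ε →
        Summable (fun k : ℕ => ‖β k * z ^ k‖)) ∧
      TendstoUniformlyOn
        (fun (N : ℕ) (z : ℂ) => ∑ k ∈ Finset.range N, β k * z ^ k)
        (fun z : ℂ => ∑' k : ℕ, β k * z ^ k) atTop {z : ℂ | ‖z‖ ≤ b - ε} ∧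
      TendstoUniformlyOn
        (fun (j : ℕ) (z : ℂ) => (PhiP α (nseq j)).eval z / (starRingEnd ℂ) (α (nseq j - 1)))
        (fun z : ℂ => -S z * ∑' k : ℕ, β k * z ^ k) atTop
        {z : ℂ | ‖z‖ ≤ b - ε} := by
  intro ε hε hεb
  have hroot_bdd : IsBoundedUnder (· ≤ ·) atTop fun n : ℕ ↦ ‖α n‖ ^ (n : ℝ)⁻¹ :=
    isBoundedUnder_of ⟨1, fun n ↦ Real.rpow_le_one (norm_nonneg _) (hα n).le (by positivity)⟩
  obtain ⟨c, hc⟩ := exists_le_mul_pow_of_eventually_le (q := (1 + b) / 2) (by linarith) <|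
    eventually_le_pow_of_limsup_rpow_inv_lt (fun n ↦ norm_nonneg (α n)) hroot_bdd
      (by rw [hlimsup]; linarith)
  obtain ⟨M, hM⟩ := exists_norm_eval_PhiP_PhiStarP_le α (by linarith) (by linarith) hc
  have hΦstar := tendstoUniformlyOn_eval_PhiStarP α (by linarith) (by linarith) hc
    fun z hz ↦ hS z (hz.trans_lt (one_lt_one_div (hε.trans hεb) hb1))
  have hr' : 0 < b - ε / 2 := by linarith
  have hrr' : b - ε < b - ε / 2 := by linarith
  obtain ⟨Cε, -, hCε⟩ := hbd (ε / 2) (half_pos hε)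
  have hratio (j k : ℕ) (hk : k < nseq j) :
      ‖verblunskyRatio α (nseq j) k‖ ≤ max Cε 1 / (b - ε / 2) ^ k :=
    norm_verblunskyRatio_le α hr' (hnz j) (hCε j) hk
  have hterm (k : ℕ) (z : ℂ) (hz : z ∈ {z : ℂ | ‖z‖ ≤ b - ε}) :
      ‖β k * z ^ k‖ ≤ max Cε 1 * ((b - ε) / (b - ε / 2)) ^ k :=
    norm_mul_pow_le_of_tendsto_verblunskyRatio α hmono.tendsto_atTop hβ hratio k hz
  have hgeom : Summable fun k ↦ max Cε 1 * ((b - ε) / (b - ε / 2)) ^ k :=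
    (summable_geometric_of_lt_one (div_nonneg (by linarith) hr'.le)
      ((div_lt_one hr').2 hrr')).mul_left _
  refine ⟨fun z hz ↦ hgeom.of_nonneg_of_le (fun _ ↦ norm_nonneg _) (hterm · z hz),
    tendstoUniformlyOn_tsum_nat hgeom hterm,
    tendstoUniformlyOn_eval_PhiP_div α hmono.tendsto_atTop hβ hΦstar (fun n z hz ↦ (hM n z hz).2)
      (zero_le_one.trans (le_max_right Cε 1)) (by linarith) hrr' (by linarith) hratio
      (eventually_pow_le_mul_norm α hmono hr' (by rw [hliminf]; linarith) hCε)⟩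

theorem stmt_8 (α : ℕ → ℂ) (hα : ∀ n, ‖α n‖ < 1)
    (b : ℝ) (hb0 : 0 < b) (hb1 : b < 1)
    (nseq : ℕ → ℕ) (hmono : StrictMono nseq) (hpos : ∀ j, 0 < nseq j)
    (hnz : ∀ j, α (nseq j - 1) ≠ 0)
    (hlimsup : Filter.limsup (fun n : ℕ => ‖α n‖ ^ ((n : ℝ))⁻¹) atTop = b)
    (hliminf : Filter.liminf (fun j : ℕ =>
      ‖α (nseq j)‖ ^ ((nseq j : ℝ))⁻¹) atTop = b)
    (β : ℕ → ℂ)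
    (hβ : ∀ k : ℕ, Tendsto (fun j : ℕ =>
      (starRingEnd ℂ) (α (nseq j - k - 1)) / (starRingEnd ℂ) (α (nseq j - 1)))
      atTop (nhds (β k)))
    (hbd : ∀ ε : ℝ, 0 < ε → ∃ Cε : ℝ, 0 < Cε ∧ ∀ j k : ℕ, 1 ≤ k → k + 1 ≤ nseq j →
      ‖α (nseq j - k - 1)‖ * (b - ε) ^ k ≤ Cε * ‖α (nseq j - 1)‖)
    (S : ℂ → ℂ)
    (hS : ∀ z : ℂ, ‖z‖ < 1 / b →
      Tendsto (fun n : ℕ => (PhiStarP α n).eval z) atTop (nhds (S z)))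
 :
    ∀ ε : ℝ, 0 < ε → ε < b →
      (∀ z : ℂ, ‖z‖ ≤ b - ε →
        Summable (fun k : ℕ => ‖β k * z ^ k‖)) ∧
      TendstoUniformlyOn
        (fun (N : ℕ) (z : ℂ) => ∑ k ∈ Finset.range N, β k * z ^ k)
        (fun z : ℂ => ∑' k : ℕ, β k * z ^ k) atTop {z : ℂ | ‖z‖ ≤ b - ε} ∧
      TendstoUniformlyOn
        (fun (j : ℕ) (z : ℂ) => (PhiP α (nseq j)).eval z / (starRingEnd ℂ) (α (nseq j - 1)))
        (fun z : ℂ => -S z * ∑' k : ℕ, β k * z ^ k) atTop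
        {z : ℂ | ‖z‖ ≤ b - ε} :=
  stmt_8_general α hα b hb1 nseq hmono hnz hlimsup hliminf β hβ hbd S hS
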